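/- For positive integers k and s, the constrained lattice path counts a(n,s) satisfy the recursion a(2k, s) = Σ_{r ≥ 0, r ≡ s (mod 2)} 2^r · binomial(k, r) · a(k−r−2, (s−r)/2), where a(m, t) is interpreted as 0 if t > 0 and m+2−2t < 0, and a(m,0) = 1 for m ≥ −2. -/

import Mathlib

open Finset
open scoped Classical
noncomputable section

/-- Position (x-coordinate) after `t` steps of the path `p`, where `true` encodes a
right step `(x,y) ↦ (x+1,y+1)` and `false` a left step `(x,y) ↦ (x-1,y+1)`. -/
def pathPos {m : ℕ} (p : Fin m → Bool) (t : ℕ) : ℤ :=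
  ∑ j : Fin m, if (j : ℕ) < t then (if p j then (1 : ℤ) else -1) else 0

/-- Generally admissible paths of size `(n,s)`: `n+2` diagonal steps starting at `(0,0)`,
the 0-th and the last step going right, with exactly `s` left steps
(hence ending at `(n+2-2s, n+2)`). -/
def admissible (n s : ℕ) : Finset (Fin (n + 2) → Bool) :=
  Finset.univ.filter (fun p =>
    (∀ j : Fin (n + 2), (j : ℕ) = 0 → p j = true) ∧
    (∀ j : Fin (n + 2), (j : ℕ) = n + 1 → p j = true) ∧
    (Finset.univ.filter (fun j => p j = false)).card = s)

/-- The path crosses the line `x = 0`, i.e. reaches x-coordinate `-1` at some time. -/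
def crossesLeft {m : ℕ} (p : Fin m → Bool) : Prop :=
  ∃ t ∈ Finset.range (m + 1), pathPos p t = -1

/-- A path of size `(n,s)` crosses the line `x = n+2-2s`,
i.e. reaches x-coordinate `n+3-2s` at some time. -/
def crossesRight (n s : ℕ) (p : Fin (n + 2) → Bool) : Prop :=
  ∃ t ∈ Finset.range (n + 3), pathPos p t = (n : ℤ) + 3 - 2 * s

/-- `L n s`: the number of generally admissible paths of size `(n,s)`
crossing the line `x = 0`. -/
def L (n s : ℕ) : ℕ := ((admissible n s).filter (fun p => crossesLeft p)).card

/-- Constrained lattice paths: `n+2` diagonal steps from `(0,0)` to `(n+2-2s, n+2)`,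
staying inside the strip `0 ≤ x ≤ n+2-2s`.  (`n` is allowed to be a negative integer,
with the convention that there are `max (n+2) 0` steps.) -/
def aPaths (n : ℤ) (s : ℕ) : Finset (Fin (n + 2).toNat → Bool) :=
  Finset.univ.filter (fun p =>
    pathPos p (n + 2).toNat = n + 2 - 2 * s ∧
    ∀ t ∈ Finset.range ((n + 2).toNat + 1),
      0 ≤ pathPos p t ∧ pathPos p t ≤ n + 2 - 2 * s)

/-- `a n s`: the number of lattice paths from `(0,0)` to `(n+2-2s, n+2)` with steps
`(x,y) ↦ (x±1, y+1)` staying inside the strip `0 ≤ x ≤ n+2-2s`. -/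
def a (n : ℤ) (s : ℕ) : ℕ := (aPaths n s).card

/-- Binomial coefficient `C(n,k)` with integer lower index, zero when `k < 0`. -/
def binom (n : ℕ) (k : ℤ) : ℕ := if k < 0 then 0 else n.choose k.toNat

/-- `b W H`: the number of lattice paths from `(0,0)` to `(W,H)` with steps
`(x,y) ↦ (x±1,y+1)` staying in the strip `0 ≤ x ≤ W`, whose first and last steps go
right, and whose intermediate steps come in consecutive same-direction pairs
`(1,2), (3,4), …, (H-3,H-2)`. -/
def bPaths (W H : ℕ) : Finset (Fin H → Bool) :=
  Finset.univ.filter (fun p =>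
    (∀ j : Fin H, (j : ℕ) = 0 → p j = true) ∧
    (∀ j : Fin H, (j : ℕ) = H - 1 → p j = true) ∧
    (∀ j1 j2 : Fin H, (j1 : ℕ) % 2 = 1 → (j2 : ℕ) = (j1 : ℕ) + 1 →
      (j1 : ℕ) + 1 ≤ H - 2 → p j1 = p j2) ∧
    pathPos p H = (W : ℤ) ∧
    ∀ t ∈ Finset.range (H + 1), 0 ≤ pathPos p t ∧ pathPos p t ≤ (W : ℤ))

def b (W H : ℕ) : ℕ := (bPaths W H).card

/-! ### Auxiliary material for stmt11 -/

section Aux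

lemma sum_ite_lt_succ {m : ℕ} (g : Fin m → ℤ) (t : ℕ) (ht : t < m) :
    (∑ j : Fin m, if (j : ℕ) < t + 1 then g j else 0)
      = (∑ j : Fin m, if (j : ℕ) < t then g j else 0) + g ⟨t, ht⟩ := by
  have h1 : ∀ j : Fin m, (if (j : ℕ) < t + 1 then g j else 0)
      = (if (j : ℕ) < t then g j else 0) + (if j = ⟨t, ht⟩ then g j else 0) := by
    intro j
    have hj : (j = (⟨t, ht⟩ : Fin m)) ↔ (j : ℕ) = t := by
      constructor
      · intro h; simp [h]
      · intro h; exact Fin.ext h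
    by_cases h2 : (j : ℕ) = t
    · simp [hj, h2]
    · have : ((j : ℕ) < t + 1) ↔ ((j : ℕ) < t) := by omega
      simp [hj, h2, this]
  rw [Finset.sum_congr rfl (fun j _ => h1 j), Finset.sum_add_distrib,
    Finset.sum_ite_eq' Finset.univ ⟨t, ht⟩ g]
  simp

lemma pathPos_zero {m : ℕ} (p : Fin m → Bool) : pathPos p 0 = 0 := by
  simp [pathPos]

lemma pathPos_succ {m : ℕ} (p : Fin m → Bool) (t : ℕ) (ht : t < m) :
    pathPos p (t + 1) = pathPos p t + (if p ⟨t, ht⟩ then (1 : ℤ) else -1) := by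
  simpa [pathPos] using sum_ite_lt_succ (fun j => if p j then (1 : ℤ) else -1) t ht

/-- `aN m s`: lattice path count with natural-number height parameter. -/
def aNPaths (m s : ℕ) : Finset (Fin m → Bool) :=
  Finset.univ.filter (fun p =>
    pathPos p m = (m : ℤ) - 2 * s ∧
    ∀ t ∈ Finset.range (m + 1), 0 ≤ pathPos p t ∧ pathPos p t ≤ (m : ℤ) - 2 * s)

lemma a_eq_aNPaths (n : ℤ) (s : ℕ) (hn : -2 ≤ n) :
    a n s = (aNPaths (n + 2).toNat s).card := by
  have h : ((n + 2).toNat : ℤ) = n + 2 := Int.toNat_of_nonneg (by omega)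
  unfold a aPaths aNPaths
  rw [h]

/-- Step of a two-colored Motzkin path: a pair of equal booleans moves ±1,
a mixed pair is a flat step. -/
def mstep (x : Bool × Bool) : ℤ := if x.1 = x.2 then (if x.1 then 1 else -1) else 0

/-- Position after `t` steps of a two-colored Motzkin path. -/
def mpos {k : ℕ} (h : Fin k → Bool × Bool) (t : ℕ) : ℤ :=
  ∑ j : Fin k, if (j : ℕ) < t then mstep (h j) else 0

lemma mpos_zero {k : ℕ} (h : Fin k → Bool × Bool) : mpos h 0 = 0 := by simp [mpos]

lemma mpos_succ {k : ℕ} (h : Fin k → Bool × Bool) (t : ℕ) (ht : t < k) :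
    mpos h (t + 1) = mpos h t + mstep (h ⟨t, ht⟩) := by
  simpa [mpos] using sum_ite_lt_succ (fun j => mstep (h j)) t ht

/-- The two-colored Motzkin paths corresponding to `aNPaths (2k+2) s`. -/
def Mot (k s : ℕ) : Finset (Fin k → Bool × Bool) :=
  Finset.univ.filter (fun h =>
    mpos h k = (k : ℤ) - s ∧
    ∀ t ∈ Finset.range (k + 1), 0 ≤ mpos h t ∧ mpos h t ≤ (k : ℤ) - s)

/-- Pairing the intermediate steps of a path of height `2k+2`. -/
def pairs (k : ℕ) (p : Fin (2 * k + 2) → Bool) : Fin k → Bool × Bool :=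
  fun i => (p ⟨2 * (i : ℕ) + 1, by have := i.isLt; omega⟩,
            p ⟨2 * (i : ℕ) + 2, by have := i.isLt; omega⟩)

/-- Inverse of `pairs`: reinserting the forced first and last steps. -/
def unpair (k : ℕ) (h : Fin k → Bool × Bool) : Fin (2 * k + 2) → Bool := fun j =>
  if hj : (j : ℕ) = 0 ∨ (j : ℕ) = 2 * k + 1 then true
  else if ho : (j : ℕ) % 2 = 1 then (h ⟨(j : ℕ) / 2, by have := j.isLt; omega⟩).1
  else (h ⟨(j : ℕ) / 2 - 1, by have := j.isLt; omega⟩).2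

lemma pairs_unpair (k : ℕ) (h : Fin k → Bool × Bool) : pairs k (unpair k h) = h := by
  funext i
  have hik := i.isLt
  show ((unpair k h) ⟨2 * (i : ℕ) + 1, by omega⟩, (unpair k h) ⟨2 * (i : ℕ) + 2, by omega⟩)
      = h i
  unfold unpair
  have h1 : ¬((2 * (i : ℕ) + 1) = 0 ∨ (2 * (i : ℕ) + 1) = 2 * k + 1) := by omega
  have h2 : (2 * (i : ℕ) + 1) % 2 = 1 := by omega
  have h3 : ¬((2 * (i : ℕ) + 2) = 0 ∨ (2 * (i : ℕ) + 2) = 2 * k + 1) := by omega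
  have h4 : ¬((2 * (i : ℕ) + 2) % 2 = 1) := by omega
  simp only [h1, h2, h3, h4, dite_false, dite_true, not_false_iff]
  have e1 : (⟨(2 * (i : ℕ) + 1) / 2, by omega⟩ : Fin k) = i :=
    Fin.ext (by show (2 * (i : ℕ) + 1) / 2 = (i : ℕ); omega)
  have e2 : (⟨(2 * (i : ℕ) + 2) / 2 - 1, by omega⟩ : Fin k) = i :=
    Fin.ext (by show (2 * (i : ℕ) + 2) / 2 - 1 = (i : ℕ); omega)
  simp only [e1, e2]

/-- Key position lemma: positions at odd times of the full path vs. the Motzkin path. -/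
lemma pathPos_odd (k : ℕ) (p : Fin (2 * k + 2) → Bool) (hp : p ⟨0, by omega⟩ = true) :
    ∀ i, i ≤ k → pathPos p (2 * i + 1) = 1 + 2 * mpos (pairs k p) i := by
  intro i
  induction i with
  | zero =>
    intro _
    have : (2 * 0 + 1) = 0 + 1 := by norm_num
    rw [this, pathPos_succ p 0 (by omega), pathPos_zero, hp, mpos_zero]
    simp
  | succ i ih =>
    intro hik
    have hik' : i < k := by omega
    have h1 : 2 * (i + 1) + 1 = (2 * i + 1) + 1 + 1 := by ring
    rw [h1, pathPos_succ p ((2 * i + 1) + 1) (by omega), pathPos_succ p (2 * i + 1) (by omega),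
        ih (by omega), mpos_succ (pairs k p) i hik']
    have e1 : ((⟨2 * i + 1, by omega⟩ : Fin (2 * k + 2))) =
        ⟨2 * (i : ℕ) + 1, by omega⟩ := rfl
    show 1 + 2 * mpos (pairs k p) i +
        (if p ⟨2 * i + 1, by omega⟩ then (1:ℤ) else -1) +
        (if p ⟨2 * i + 1 + 1, by omega⟩ then (1:ℤ) else -1)
      = 1 + 2 * (mpos (pairs k p) i + mstep (pairs k p ⟨i, hik'⟩))
    have e2 : pairs k p ⟨i, hik'⟩ = (p ⟨2 * i + 1, by omega⟩, p ⟨2 * i + 1 + 1, by omega⟩) := by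
      unfold pairs
      constructor
    rw [e2]
    cases hb1 : p ⟨2 * i + 1, by omega⟩ <;> cases hb2 : p ⟨2 * i + 1 + 1, by omega⟩ <;>
      simp [mstep] <;> try ring

lemma aN_first_last (k s : ℕ) (p : Fin (2 * k + 2) → Bool)
    (hp : p ∈ aNPaths (2 * k + 2) s) :
    p ⟨0, by omega⟩ = true ∧ p ⟨2 * k + 1, by omega⟩ = true := by
  simp only [aNPaths, Finset.mem_filter, Finset.mem_univ, true_and] at hp
  obtain ⟨hend, hstrip⟩ := hp
  constructor
  · have h1 := (hstrip 1 (by simp)).1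
    rw [show (1:ℕ) = 0 + 1 from rfl, pathPos_succ p 0 (by omega), pathPos_zero] at h1
    cases hb : p ⟨0, by omega⟩
    · rw [hb] at h1; norm_num at h1
    · rfl
  · have h2 := (hstrip (2 * k + 1) (by simp)).2
    have h3 : pathPos p (2 * k + 2) = pathPos p (2 * k + 1) +
        (if p ⟨2 * k + 1, by omega⟩ then (1:ℤ) else -1) :=
      pathPos_succ p (2 * k + 1) (by omega)
    rw [hend] at h3
    cases hb : p ⟨2 * k + 1, by omega⟩
    · rw [hb] at h3; simp at h3; omega
    · rfl

lemma cardA_eq_cardMot (k s : ℕ) : (aNPaths (2 * k + 2) s).card = (Mot k s).card := by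
  apply Finset.card_bij' (fun p _ => pairs k p) (fun h _ => unpair k h)
  · -- maps into Mot
    intro p hp
    obtain ⟨hp0, hpl⟩ := aN_first_last k s p hp
    simp only [aNPaths, Finset.mem_filter, Finset.mem_univ, true_and] at hp
    obtain ⟨hend, hstrip⟩ := hp
    have key := pathPos_odd k p hp0
    simp only [Mot, Finset.mem_filter, Finset.mem_univ, true_and]
    refine ⟨?_, ?_⟩
    · have h3 : pathPos p (2 * k + 2) = pathPos p (2 * k + 1) +
          (if p ⟨2 * k + 1, by omega⟩ then (1:ℤ) else -1) :=
        pathPos_succ p (2 * k + 1) (by omega)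
      rw [hend, hpl, key k le_rfl] at h3
      simp at h3
      push_cast
      omega
    · intro t ht
      rw [Finset.mem_range] at ht
      have h4 := hstrip (2 * t + 1) (by rw [Finset.mem_range]; omega)
      rw [key t (by omega)] at h4
      push_cast at h4 ⊢
      omega
  · -- maps into aNPaths
    intro h hh
    simp only [Mot, Finset.mem_filter, Finset.mem_univ, true_and] at hh
    obtain ⟨hend, hstrip⟩ := hh
    have hks : 0 ≤ (k : ℤ) - s := by
      have := (hstrip 0 (by simp)).2
      rwa [mpos_zero] at this
    have hu0 : unpair k h ⟨0, by omega⟩ = true := by simp [unpair]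
    have hul : unpair k h ⟨2 * k + 1, by omega⟩ = true := by
      unfold unpair; simp
    have key : ∀ i, i ≤ k → pathPos (unpair k h) (2 * i + 1) = 1 + 2 * mpos h i := by
      intro i hi
      rw [pathPos_odd k (unpair k h) hu0 i hi, pairs_unpair]
    have hbd : ∀ i, i ≤ k → 0 ≤ mpos h i ∧ mpos h i ≤ (k : ℤ) - s := by
      intro i hi
      exact hstrip i (by rw [Finset.mem_range]; omega)
    have hendp : pathPos (unpair k h) (2 * k + 2) = (2 * k + 2 : ℤ) - 2 * s := by
      have h3 : pathPos (unpair k h) (2 * k + 2) = pathPos (unpair k h) (2 * k + 1) +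
          (if unpair k h ⟨2 * k + 1, by omega⟩ then (1:ℤ) else -1) :=
        pathPos_succ (unpair k h) (2 * k + 1) (by omega)
      rw [hul, key k le_rfl, hend] at h3
      simp at h3
      rw [h3]; push_cast; ring
    simp only [aNPaths, Finset.mem_filter, Finset.mem_univ, true_and]
    refine ⟨by rw [hendp]; push_cast; ring, ?_⟩
    intro t ht
    rw [Finset.mem_range] at ht
    rcases Nat.even_or_odd t with he | ho
    · rcases Nat.eq_zero_or_pos t with h0 | hpos
      · subst h0
        rw [pathPos_zero]
        constructor
        · exact le_rfl
        · push_cast; omega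
      · obtain ⟨i, hi⟩ : ∃ i, t = 2 * i + 2 := by
          obtain ⟨c, hc⟩ := he; exact ⟨c - 1, by omega⟩
        have hik : i ≤ k := by omega
        have h3 : pathPos (unpair k h) (2 * i + 2) = pathPos (unpair k h) (2 * i + 1) +
            (if unpair k h ⟨2 * i + 1, by omega⟩ then (1:ℤ) else -1) :=
          pathPos_succ (unpair k h) (2 * i + 1) (by omega)
        rw [key i hik] at h3
        have := hbd i hik
        subst hi
        rw [h3]
        push_cast
        split_ifs <;> constructor <;> push_cast <;> omega
    · obtain ⟨i, hi⟩ := ho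
      have hik : i ≤ k := by omega
      subst hi
      rw [key i hik]
      have := hbd i hik
      constructor <;> push_cast <;> omega
  · -- left inverse
    intro p hp
    obtain ⟨hp0, hpl⟩ := aN_first_last k s p hp
    funext j
    have hj := j.isLt
    unfold unpair
    by_cases h0 : (j : ℕ) = 0 ∨ (j : ℕ) = 2 * k + 1
    · rw [dif_pos h0]
      rcases h0 with h0 | h0
      · rw [show j = (⟨0, by omega⟩ : Fin (2 * k + 2)) from Fin.ext h0]; exact hp0.symm
      · rw [show j = (⟨2 * k + 1, by omega⟩ : Fin (2 * k + 2)) from Fin.ext h0]; exact hpl.symm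
    · rw [dif_neg h0]
      by_cases h1 : (j : ℕ) % 2 = 1
      · rw [dif_pos h1]
        show (pairs k p ⟨(j : ℕ) / 2, by omega⟩).1 = p j
        unfold pairs
        have : (⟨2 * ((j : ℕ) / 2) + 1, by omega⟩ : Fin (2 * k + 2)) = j :=
          Fin.ext (by show 2 * ((j : ℕ) / 2) + 1 = (j : ℕ); omega)
        rw [this]
      · rw [dif_neg h1]
        show (pairs k p ⟨(j : ℕ) / 2 - 1, by omega⟩).2 = p j
        unfold pairs
        have : (⟨2 * ((j : ℕ) / 2 - 1) + 2, by omega⟩ : Fin (2 * k + 2)) = j :=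
          Fin.ext (by show 2 * ((j : ℕ) / 2 - 1) + 2 = (j : ℕ); omega)
        rw [this]
  · -- right inverse
    intro h _
    exact pairs_unpair k h

/-! #### Counting function for positions outside `M` -/

/-- Number of indices `< t` outside `M`. -/
def cnt {k : ℕ} (M : Finset (Fin k)) (t : ℕ) : ℕ :=
  (Finset.univ.filter (fun x : Fin k => x ∉ M ∧ (x : ℕ) < t)).card

lemma cnt_zero {k : ℕ} (M : Finset (Fin k)) : cnt M 0 = 0 := by
  simp [cnt]

lemma cnt_succ {k : ℕ} (M : Finset (Fin k)) (t : ℕ) (ht : t < k) :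
    cnt M (t + 1) = cnt M t + (if (⟨t, ht⟩ : Fin k) ∈ M then 0 else 1) := by
  by_cases hM : (⟨t, ht⟩ : Fin k) ∈ M
  · have hfeq : Finset.univ.filter (fun x : Fin k => x ∉ M ∧ (x : ℕ) < t + 1)
        = Finset.univ.filter (fun x : Fin k => x ∉ M ∧ (x : ℕ) < t) := by
      apply Finset.ext
      intro x
      simp only [Finset.mem_filter, Finset.mem_univ, true_and]
      constructor
      · rintro ⟨h1, h2⟩
        refine ⟨h1, ?_⟩
        rcases Nat.lt_succ_iff_lt_or_eq.1 h2 with h | h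
        · exact h
        · exact absurd ((Fin.ext h : x = ⟨t, ht⟩) ▸ hM) h1
      · rintro ⟨h1, h2⟩; exact ⟨h1, by omega⟩
    rw [if_pos hM]
    unfold cnt
    rw [hfeq]
    omega
  · rw [if_neg hM]
    unfold cnt
    have hins : Finset.univ.filter (fun x : Fin k => x ∉ M ∧ (x : ℕ) < t + 1)
        = insert (⟨t, ht⟩ : Fin k)
            (Finset.univ.filter (fun x : Fin k => x ∉ M ∧ (x : ℕ) < t)) := by
      apply Finset.ext
      intro x
      simp only [Finset.mem_filter, Finset.mem_univ, true_and, Finset.mem_insert]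
      constructor
      · rintro ⟨h1, h2⟩
        rcases Nat.lt_succ_iff_lt_or_eq.1 h2 with h | h
        · exact Or.inr ⟨h1, h⟩
        · exact Or.inl (Fin.ext h)
      · rintro (h | ⟨h1, h2⟩)
        · exact ⟨by rw [h]; exact hM, by rw [h]; exact Nat.lt_succ_self t⟩
        · exact ⟨h1, by omega⟩
    rw [hins, Finset.card_insert_of_notMem (by simp)]

lemma cnt_mono {k : ℕ} (M : Finset (Fin k)) {t t' : ℕ} (h : t ≤ t') :
    cnt M t ≤ cnt M t' := by
  apply Finset.card_le_card
  intro x hx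
  rw [Finset.mem_filter] at hx ⊢
  exact ⟨hx.1, hx.2.1, by omega⟩

lemma cnt_k {k : ℕ} (M : Finset (Fin k)) : cnt M k = k - M.card := by
  unfold cnt
  have h1 : Finset.univ.filter (fun x : Fin k => x ∉ M ∧ (x : ℕ) < k)
      = Finset.univ.filter (fun x : Fin k => x ∉ M) := by
    apply Finset.filter_congr
    intro x _
    simp [x.isLt]
  rw [h1, Finset.filter_not, Finset.card_sdiff_of_subset (Finset.subset_univ _)]
  congr 1
  · simp
  · congr 1
    exact Finset.filter_univ_mem M

lemma cnt_lt {k : ℕ} (M : Finset (Fin k)) (i : Fin k) (hi : i ∉ M) :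
    cnt M (i : ℕ) < k - M.card := by
  have h1 : cnt M ((i : ℕ) + 1) = cnt M (i : ℕ) + 1 := by
    rw [cnt_succ M (i : ℕ) i.isLt]
    have : (⟨(i : ℕ), i.isLt⟩ : Fin k) = i := Fin.ext rfl
    rw [this, if_neg hi]
  have h2 : cnt M ((i : ℕ) + 1) ≤ cnt M k := cnt_mono M i.isLt
  rw [cnt_k] at h2
  omega

lemma cnt_surj {k : ℕ} (M : Finset (Fin k)) :
    ∀ T, T ≤ k → ∀ j, j < cnt M T → ∃ i : Fin k, (i : ℕ) < T ∧ i ∉ M ∧ cnt M (i : ℕ) = j := by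
  intro T
  induction T with
  | zero => intro _ j hj; rw [cnt_zero] at hj; omega
  | succ T ih =>
    intro hT j hj
    have hTk : T < k := by omega
    rw [cnt_succ M T hTk] at hj
    by_cases hM : (⟨T, hTk⟩ : Fin k) ∈ M
    · rw [if_pos hM] at hj
      obtain ⟨i, h1, h2, h3⟩ := ih (by omega) j (by omega)
      exact ⟨i, by omega, h2, h3⟩
    · rw [if_neg hM] at hj
      by_cases hjc : j < cnt M T
      · obtain ⟨i, h1, h2, h3⟩ := ih (by omega) j hjc
        exact ⟨i, by omega, h2, h3⟩
      · have : j = cnt M T := by omega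
        exact ⟨⟨T, hTk⟩, Nat.lt_succ_self T, hM, by simpa using this.symm⟩

lemma cnt_inj {k : ℕ} (M : Finset (Fin k)) (i i' : Fin k) (hi : i ∉ M) (hi' : i' ∉ M)
    (h : cnt M (i : ℕ) = cnt M (i' : ℕ)) : i = i' := by
  rcases lt_trichotomy (i : ℕ) (i' : ℕ) with hlt | heq | hgt
  · exfalso
    have h1 : cnt M ((i : ℕ) + 1) = cnt M (i : ℕ) + 1 := by
      rw [cnt_succ M (i : ℕ) i.isLt, show (⟨(i : ℕ), i.isLt⟩ : Fin k) = i from Fin.ext rfl,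
        if_neg hi]
    have h2 : cnt M ((i : ℕ) + 1) ≤ cnt M (i' : ℕ) := cnt_mono M (by omega)
    omega
  · exact Fin.ext heq
  · exfalso
    have h1 : cnt M ((i' : ℕ) + 1) = cnt M (i' : ℕ) + 1 := by
      rw [cnt_succ M (i' : ℕ) i'.isLt, show (⟨(i' : ℕ), i'.isLt⟩ : Fin k) = i' from Fin.ext rfl,
        if_neg hi']
    have h2 : cnt M ((i' : ℕ) + 1) ≤ cnt M (i : ℕ) := cnt_mono M (by omega)
    omega

/-! #### Inserting and extracting flat steps -/

/-- The set of flat (mixed) steps of a two-colored Motzkin path. -/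
def Mx {k : ℕ} (h : Fin k → Bool × Bool) : Finset (Fin k) :=
  Finset.univ.filter (fun i => (h i).1 ≠ (h i).2)

/-- Insert flat steps (with directions `f`) at the positions of `M` into the up-down
path `q`. -/
def insFlat {k : ℕ} (M : Finset (Fin k)) (f : {x // x ∈ M} → Bool)
    (q : Fin (k - M.card) → Bool) : Fin k → Bool × Bool := fun i =>
  if hi : i ∈ M then (f ⟨i, hi⟩, !(f ⟨i, hi⟩))
  else (q ⟨cnt M (i : ℕ), cnt_lt M i hi⟩, q ⟨cnt M (i : ℕ), cnt_lt M i hi⟩)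

/-- Extract the directions of flat steps and the underlying up-down path. -/
def extFlat {k : ℕ} (M : Finset (Fin k)) (h : Fin k → Bool × Bool) :
    ({x // x ∈ M} → Bool) × (Fin (k - M.card) → Bool) :=
  (fun x => (h x.1).1,
   fun j => (h (Classical.choose (cnt_surj M k le_rfl (j : ℕ)
      (by rw [cnt_k]; exact j.isLt)))).1)

lemma Mx_insFlat {k : ℕ} (M : Finset (Fin k)) (f : {x // x ∈ M} → Bool)
    (q : Fin (k - M.card) → Bool) : Mx (insFlat M f q) = M := by
  apply Finset.ext
  intro i
  simp only [Mx, Finset.mem_filter, Finset.mem_univ, true_and]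
  constructor
  · intro hne
    by_contra hi
    rw [insFlat, dif_neg hi] at hne
    exact hne rfl
  · intro hi
    rw [insFlat, dif_pos hi]
    cases f ⟨i, hi⟩ <;> simp

lemma mpos_insFlat {k : ℕ} (M : Finset (Fin k)) (f : {x // x ∈ M} → Bool)
    (q : Fin (k - M.card) → Bool) :
    ∀ t, t ≤ k → mpos (insFlat M f q) t = pathPos q (cnt M t) := by
  intro t
  induction t with
  | zero => intro _; rw [mpos_zero, cnt_zero, pathPos_zero]
  | succ t ih =>
    intro ht
    have htk : t < k := by omega
    rw [mpos_succ _ t htk, ih (by omega), cnt_succ M t htk]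
    by_cases hM : (⟨t, htk⟩ : Fin k) ∈ M
    · rw [if_pos hM]
      have : mstep (insFlat M f q ⟨t, htk⟩) = 0 := by
        rw [insFlat, dif_pos hM]
        cases f ⟨⟨t, htk⟩, hM⟩ <;> simp [mstep]
      rw [this]
      simp
    · rw [if_neg hM]
      have hcl : cnt M t < k - M.card := by
        have := cnt_lt M ⟨t, htk⟩ hM
        simpa using this
      rw [pathPos_succ q (cnt M t) hcl]
      have : mstep (insFlat M f q ⟨t, htk⟩)
          = (if q ⟨cnt M t, hcl⟩ then (1 : ℤ) else -1) := by
        rw [insFlat, dif_neg hM]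
        cases hq : q ⟨cnt M t, hcl⟩ <;> simp [mstep]
      rw [this]

lemma insFlat_extFlat {k : ℕ} (M : Finset (Fin k)) (h : Fin k → Bool × Bool)
    (hM : Mx h = M) : insFlat M (extFlat M h).1 (extFlat M h).2 = h := by
  funext i
  by_cases hi : i ∈ M
  · rw [insFlat, dif_pos hi]
    have hmix : (h i).1 ≠ (h i).2 := by
      have : i ∈ Mx h := hM ▸ hi
      simpa [Mx] using this
    show ((h i).1, !(h i).1) = h i
    have hmix' : (h i).2 = !(h i).1 := by
      cases hh1 : (h i).1 <;> cases hh2 : (h i).2 <;> simp_all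
    rw [← hmix']
  · rw [insFlat, dif_neg hi]
    have heq : (h i).1 = (h i).2 := by
      have : i ∉ Mx h := hM ▸ hi
      simpa [Mx] using this
    have hspec := Classical.choose_spec (cnt_surj M k le_rfl
      ((⟨cnt M (i : ℕ), cnt_lt M i hi⟩ : Fin (k - M.card)) : ℕ)
      (by rw [cnt_k]; exact (⟨cnt M (i : ℕ), cnt_lt M i hi⟩ : Fin (k - M.card)).isLt))
    set i' := Classical.choose (cnt_surj M k le_rfl
      ((⟨cnt M (i : ℕ), cnt_lt M i hi⟩ : Fin (k - M.card)) : ℕ)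
      (by rw [cnt_k]; exact (⟨cnt M (i : ℕ), cnt_lt M i hi⟩ : Fin (k - M.card)).isLt)) with hi'
    obtain ⟨-, h2, h3⟩ := hspec
    have : i' = i := cnt_inj M i' i h2 hi (by simpa using h3)
    show ((h i').1, (h i').1) = h i
    rw [this]
    nth_rewrite 2 [heq]
    rfl

lemma extFlat_insFlat {k : ℕ} (M : Finset (Fin k)) (f : {x // x ∈ M} → Bool)
    (q : Fin (k - M.card) → Bool) : extFlat M (insFlat M f q) = (f, q) := by
  unfold extFlat
  refine Prod.ext ?_ ?_
  · funext x
    show (insFlat M f q x.1).1 = f x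
    rw [insFlat, dif_pos x.2]
  · funext j
    show (insFlat M f q (Classical.choose _)).1 = q j
    have hspec := Classical.choose_spec (cnt_surj M k le_rfl (j : ℕ)
      (by rw [cnt_k]; exact j.isLt))
    obtain ⟨-, h2, h3⟩ := hspec
    rw [insFlat, dif_neg h2]
    show q ⟨cnt M _, _⟩ = q j
    congr 1
    exact Fin.ext h3

lemma mpos_k_eq_sum {k : ℕ} (h : Fin k → Bool × Bool) :
    mpos h k = ∑ j : Fin k, mstep (h j) := by
  unfold mpos
  apply Finset.sum_congr rfl
  intro j _
  rw [if_pos j.isLt]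

lemma filter_not_mem_card {k : ℕ} (M : Finset (Fin k)) :
    (Finset.univ.filter (fun x : Fin k => x ∉ M)).card = k - M.card := by
  rw [Finset.filter_not, Finset.card_sdiff_of_subset (Finset.subset_univ _)]
  congr 1
  · simp
  · congr 1
    exact Finset.filter_univ_mem M

lemma mcard_le (k : ℕ) (M : Finset (Fin k)) : M.card ≤ k := by
  have := Finset.card_le_card (Finset.subset_univ M)
  simpa using this

lemma fiber_empty (k s : ℕ) (M : Finset (Fin k))
    (hbad : ¬((s - M.card) % 2 = 0 ∧ M.card ≤ s)) :
    (Mot k s).filter (fun h => Mx h = M) = ∅ := by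
  rw [Finset.filter_eq_empty_iff]
  intro h hh
  intro hMx
  simp only [Mot, Finset.mem_filter, Finset.mem_univ, true_and] at hh
  obtain ⟨hend, hstrip⟩ := hh
  have hsplit : mpos h k = ∑ i ∈ Finset.univ.filter (fun i : Fin k => i ∉ M), mstep (h i) := by
    rw [mpos_k_eq_sum]
    rw [← Finset.sum_filter_add_sum_filter_not Finset.univ (fun i : Fin k => i ∉ M)
      (fun i => mstep (h i))]
    have hz : ∑ i ∈ Finset.univ.filter (fun i : Fin k => ¬(i ∉ M)), mstep (h i) = 0 := by
      apply Finset.sum_eq_zero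
      intro i hi
      simp only [Finset.mem_filter, not_not] at hi
      have : i ∈ Mx h := hMx ▸ hi.2
      simp only [Mx, Finset.mem_filter, Finset.mem_univ, true_and] at this
      rw [mstep, if_neg this]
    rw [hz, add_zero]
  have hub : mpos h k ≤ ((k : ℤ) - M.card) := by
    rw [hsplit]
    calc ∑ i ∈ Finset.univ.filter (fun i : Fin k => i ∉ M), mstep (h i)
        ≤ ∑ _i ∈ Finset.univ.filter (fun i : Fin k => i ∉ M), (1 : ℤ) := by
          apply Finset.sum_le_sum
          intro i _
          rw [mstep]
          split_ifs <;> omega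
      _ = ((Finset.univ.filter (fun i : Fin k => i ∉ M)).card : ℤ) := by simp
      _ = ((k : ℤ) - M.card) := by
          rw [filter_not_mem_card]
          have := mcard_le k M
          push_cast [Nat.cast_sub this]
          ring
  have hdvd : (2 : ℤ) ∣ (mpos h k - ((k : ℤ) - M.card)) := by
    have h1 : mpos h k - ((k : ℤ) - M.card)
        = ∑ i ∈ Finset.univ.filter (fun i : Fin k => i ∉ M), (mstep (h i) - 1) := by
      rw [Finset.sum_sub_distrib, ← hsplit]
      simp [filter_not_mem_card M]
      have := mcard_le k M
      push_cast [Nat.cast_sub this]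
      ring
    rw [h1]
    apply Finset.dvd_sum
    intro i hi
    simp only [Finset.mem_filter, Finset.mem_univ, true_and] at hi
    have : i ∉ Mx h := hMx ▸ hi
    simp only [Mx, Finset.mem_filter, Finset.mem_univ, true_and, not_not] at this
    rw [mstep, if_pos this]
    split_ifs <;> omega
  rw [hend] at hub hdvd
  omega

lemma fiber_card (k s : ℕ) (M : Finset (Fin k)) (hpar : (s - M.card) % 2 = 0)
    (hrs : M.card ≤ s) :
    ((Mot k s).filter (fun h => Mx h = M)).card
      = 2 ^ M.card * (aNPaths (k - M.card) ((s - M.card) / 2)).card := by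
  have hrk := mcard_le k M
  have hval : ((k - M.card : ℕ) : ℤ) - 2 * (((s - M.card) / 2 : ℕ) : ℤ) = (k : ℤ) - s := by
    omega
  have hcard : ((Finset.univ : Finset ({x // x ∈ M} → Bool))
      ×ˢ aNPaths (k - M.card) ((s - M.card) / 2)).card
      = 2 ^ M.card * (aNPaths (k - M.card) ((s - M.card) / 2)).card := by
    rw [Finset.card_product, Finset.card_univ]
    congr 1
    simp [Fintype.card_coe]
  rw [← hcard]
  apply Finset.card_bij' (fun h _ => extFlat M h) (fun pq _ => insFlat M pq.1 pq.2)
  · -- extFlat maps into the product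
    intro h hh
    rw [Finset.mem_filter] at hh
    obtain ⟨hMot, hMx⟩ := hh
    simp only [Mot, Finset.mem_filter, Finset.mem_univ, true_and] at hMot
    obtain ⟨hend, hstrip⟩ := hMot
    rw [Finset.mem_product]
    refine ⟨Finset.mem_univ _, ?_⟩
    have hrw := insFlat_extFlat M h hMx
    set q := (extFlat M h).2 with hq
    have hkey : ∀ t, t ≤ k → mpos h t = pathPos q (cnt M t) := by
      intro t ht
      rw [← hrw]
      exact mpos_insFlat M (extFlat M h).1 q t ht
    have hkey' : pathPos q (k - M.card) = mpos h k := by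
      have := hkey k le_rfl
      rw [cnt_k] at this
      exact this.symm
    simp only [aNPaths, Finset.mem_filter, Finset.mem_univ, true_and]
    constructor
    · rw [hkey', hend, hval]
    · intro u hu
      rw [Finset.mem_range] at hu
      rw [hval]
      by_cases hulast : u = k - M.card
      · subst hulast
        rw [hkey', hend]
        have h0 := hstrip 0 (by simp)
        rw [mpos_zero] at h0
        omega
      · have hub : u < cnt M k := by rw [cnt_k]; omega
        obtain ⟨i, hik, hiM, hicnt⟩ := cnt_surj M k le_rfl u hub
        rw [← hicnt, ← hkey (i : ℕ) (by omega)]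
        exact hstrip (i : ℕ) (by rw [Finset.mem_range]; omega)
  · -- insFlat maps into the fiber
    intro pq hpq
    rw [Finset.mem_product] at hpq
    obtain ⟨-, hq⟩ := hpq
    simp only [aNPaths, Finset.mem_filter, Finset.mem_univ, true_and] at hq
    obtain ⟨hqend, hqstrip⟩ := hq
    rw [Finset.mem_filter]
    refine ⟨?_, Mx_insFlat M pq.1 pq.2⟩
    simp only [Mot, Finset.mem_filter, Finset.mem_univ, true_and]
    constructor
    · rw [mpos_insFlat M pq.1 pq.2 k le_rfl, cnt_k, hqend, hval]
    · intro t ht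
      rw [Finset.mem_range] at ht
      rw [mpos_insFlat M pq.1 pq.2 t (by omega)]
      have hcle : cnt M t ≤ k - M.card := by
        rw [← cnt_k M]
        exact cnt_mono M (by omega)
      have := hqstrip (cnt M t) (by rw [Finset.mem_range]; omega)
      rw [hval] at this
      exact this
  · -- left inverse
    intro h hh
    rw [Finset.mem_filter] at hh
    exact insFlat_extFlat M h hh.2
  · -- right inverse
    intro pq _
    exact extFlat_insFlat M pq.1 pq.2

end Aux

/-- for positive `k`, `s`,
`a(2k, s) = Σ_{0 ≤ r ≤ s, r ≡ s (mod 2)} 2^r C(k,r) a(k-r-2, (s-r)/2)`. -/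
theorem stmt11 (k s : ℕ) (hk : 0 < k) (hs : 0 < s) :
    a (2 * (k : ℤ)) s =
      ∑ r ∈ Finset.range (s + 1),
        if (s - r) % 2 = 0 then
          2 ^ r * k.choose r * a ((k : ℤ) - r - 2) ((s - r) / 2)
        else 0 := by
  classical
  -- the function of `r = #M` giving the cardinality of each fiber
  set f : ℕ → ℕ := fun r =>
    if (s - r) % 2 = 0 ∧ r ≤ s then 2 ^ r * (aNPaths (k - r) ((s - r) / 2)).card else 0 with hf
  -- Step 1: reduce to Motzkin paths
  have h2k : ((2 * (k : ℤ)) + 2).toNat = 2 * k + 2 := by omega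
  rw [a_eq_aNPaths (2 * (k : ℤ)) s (by omega), h2k, cardA_eq_cardMot]
  -- Step 2: fiber the Motzkin paths by their set of flat steps
  have hfib : (Mot k s).card = ∑ M ∈ (Finset.univ : Finset (Fin k)).powerset,
      ((Mot k s).filter (fun h => Mx h = M)).card :=
    Finset.card_eq_sum_card_fiberwise
      (fun h _ => Finset.mem_powerset.2 (Finset.subset_univ _))
  have hfibval : ∀ M ∈ (Finset.univ : Finset (Fin k)).powerset,
      ((Mot k s).filter (fun h => Mx h = M)).card = f M.card := by
    intro M _
    by_cases hgood : (s - M.card) % 2 = 0 ∧ M.card ≤ s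
    · rw [fiber_card k s M hgood.1 hgood.2]
      simp only [hf]
      rw [if_pos hgood]
    · rw [fiber_empty k s M hgood]
      simp only [hf]
      rw [if_neg hgood]
      simp
  rw [hfib, Finset.sum_congr rfl hfibval, Finset.sum_powerset_apply_card]
  have hcu : ((Finset.univ : Finset (Fin k)).card) = k := by simp
  rw [hcu]
  -- Step 3: compare the two sums over `r`
  have hFzero_k : ∀ x ∈ Finset.range (k + s + 1), x ∉ Finset.range (k + 1) →
      k.choose x • f x = 0 := by
    intro x _ hx
    rw [Finset.mem_range] at hx
    rw [Nat.choose_eq_zero_of_lt (by omega)]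
    simp
  have hFzero_s : ∀ x ∈ Finset.range (k + s + 1), x ∉ Finset.range (s + 1) →
      k.choose x • f x = 0 := by
    intro x _ hx
    rw [Finset.mem_range] at hx
    simp only [hf]
    rw [if_neg (by rintro ⟨-, h⟩; omega)]
    simp
  rw [Finset.sum_subset (Finset.range_subset_range.2 (by omega : k + 1 ≤ k + s + 1)) hFzero_k,
    ← Finset.sum_subset (Finset.range_subset_range.2 (by omega : s + 1 ≤ k + s + 1)) hFzero_s]
  apply Finset.sum_congr rfl
  intro r hr
  rw [Finset.mem_range] at hr
  have hrs : r ≤ s := by omega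
  rw [smul_eq_mul]
  simp only [hf]
  by_cases hpar : (s - r) % 2 = 0
  · rw [if_pos ⟨hpar, hrs⟩, if_pos hpar]
    by_cases hrk : r ≤ k
    · have htn : (((k : ℤ) - r - 2) + 2).toNat = k - r := by omega
      rw [a_eq_aNPaths ((k : ℤ) - r - 2) ((s - r) / 2) (by omega), htn]
      ring
    · rw [Nat.choose_eq_zero_of_lt (by omega)]
      ring
  · rw [if_neg (by tauto), if_neg hpar]
    simp
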